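/- arXiv:1409.0854 — 5 statements merged into one kernel-verified Lean document; each statement's English description precedes it below -/
import Mathlib

section
/- Let p, q ∈ ℝ² and let i ≠ j be two of the indices 1, 2, 3. The line integral of the Whitney 1-form W¹ᵢⱼ along the straight segment from p to q has the closed form ∫₀¹ W¹ᵢⱼ(p + s(q − p))(q − p) ds = λᵢ(p)·λⱼ(q) − λᵢ(q)·λⱼ(p). -/
open MeasureTheory

lemma aff_step (f : (Fin 2 → ℝ) →ᵃ[ℝ] ℝ) (p v : Fin 2 → ℝ) (s : ℝ) :
    f (p + s • v) = f p + s * f.linear v := by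
  have h : p + s • v = (s • v) +ᵥ p := by simp [vadd_eq_add, add_comm]
  rw [h, f.map_vadd, _root_.map_smul, smul_eq_mul, vadd_eq_add, add_comm]

/-- Closed form for the line integral of the Whitney 1-form
`W¹ᵢⱼ(r) = λᵢ(r)·Dλⱼ − λⱼ(r)·Dλᵢ` along the straight segment from `p` to `q`:
`∫₀¹ W¹ᵢⱼ(p + s(q−p))(q−p) ds = λᵢ(p)·λⱼ(q) − λᵢ(q)·λⱼ(p)`. -/
theorem whitney_one_form_line_integral
    (ν : AffineBasis (Fin 3) ℝ (Fin 2 → ℝ)) (i j : Fin 3) (hij : i ≠ j)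
    (p q : Fin 2 → ℝ) :
    (∫ s in (0:ℝ)..1,
      (ν.coord i (p + s • (q - p)) * (ν.coord j).linear (q - p)
        - ν.coord j (p + s • (q - p)) * (ν.coord i).linear (q - p)))
      = ν.coord i p * ν.coord j q - ν.coord i q * ν.coord j p := by
  have hq : ∀ f : (Fin 2 → ℝ) →ᵃ[ℝ] ℝ, f q = f p + f.linear (q - p) := by
    intro f
    have := aff_step f p (q - p) 1
    simpa using this
  have hconst : ∀ s : ℝ,
      (ν.coord i (p + s • (q - p)) * (ν.coord j).linear (q - p)
        - ν.coord j (p + s • (q - p)) * (ν.coord i).linear (q - p))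
      = ν.coord i p * (ν.coord j).linear (q - p)
        - ν.coord j p * (ν.coord i).linear (q - p) := by
    intro s
    rw [aff_step, aff_step]
    ring
  simp only [hconst]
  rw [intervalIntegral.integral_const, hq (ν.coord j), hq (ν.coord i)]
  simp
  ring
end

section
/- Exact charge conservation of the scatter step: for any p, q ∈ ℝ² and any vertex index k ∈ {1, 2, 3}, (λₖ(q) − λₖ(p)) + Σ_{j ≠ k} ∫₀¹ W¹ₖⱼ(p + s(q − p))(q − p) ds = 0; that is, the change of the barycentric (nodal) charge weight at vertex k over a straight particle path from p to q is exactly balanced by the line integrals of the Whitney 1-forms on the two edges incident to vertex k. -/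
open MeasureTheory

/-- Exact charge conservation of the scatter step: for any
`p, q ∈ ℝ²` and any vertex index `k`, the change of the barycentric (nodal)
charge weight at vertex `k` plus the sum over the two adjacent edges of the
line integrals of the Whitney 1-forms `W¹ₖⱼ` along the straight segment from
`p` to `q` vanishes. -/
theorem scatter_charge_conservation
    (ν : AffineBasis (Fin 3) ℝ (Fin 2 → ℝ)) (k : Fin 3) (p q : Fin 2 → ℝ) :
    (ν.coord k q - ν.coord k p)
      + ∑ j ∈ Finset.univ.filter (fun j => j ≠ k),
          (∫ s in (0:ℝ)..1,
            (ν.coord k (p + s • (q - p)) * (ν.coord j).linear (q - p)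
              - ν.coord j (p + s • (q - p)) * (ν.coord k).linear (q - p)))
      = 0 := by
  have key : ∀ (i : Fin 3) (s : ℝ), ν.coord i (p + s • (q - p))
      = ν.coord i p + s * (ν.coord i).linear (q - p) := by
    intro i s
    have h := (ν.coord i).map_vadd p (s • (q - p))
    have hv : (s • (q - p)) +ᵥ p = p + s • (q - p) := by
      simp [vadd_eq_add, add_comm]
    rw [hv] at h
    rw [h]
    simp [vadd_eq_add, add_comm, (ν.coord i).linear.map_smul, smul_eq_mul]
  have hL : ∀ i : Fin 3, (ν.coord i).linear (q - p) = ν.coord i q - ν.coord i p := by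
    intro i
    have := key i 1
    simp only [one_smul, one_mul] at this
    have hq : p + (q - p) = q := by abel
    rw [hq] at this
    linarith
  have hint : ∀ j : Fin 3, (∫ s in (0:ℝ)..1,
      (ν.coord k (p + s • (q - p)) * (ν.coord j).linear (q - p)
        - ν.coord j (p + s • (q - p)) * (ν.coord k).linear (q - p)))
      = ν.coord k p * (ν.coord j).linear (q - p)
        - ν.coord j p * (ν.coord k).linear (q - p) := by
    intro j
    have hfun : ∀ s : ℝ, (ν.coord k (p + s • (q - p)) * (ν.coord j).linear (q - p)
        - ν.coord j (p + s • (q - p)) * (ν.coord k).linear (q - p))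
        = ν.coord k p * (ν.coord j).linear (q - p)
          - ν.coord j p * (ν.coord k).linear (q - p) := by
      intro s; rw [key k s, key j s]; ring
    simp only [hfun]
    simp
  rw [Finset.sum_congr rfl (fun j _ => hint j)]
  have hsum1 : ∑ j, ν.coord j p = 1 := ν.sum_coord_apply_eq_one p
  have hsum2 : ∑ j, ν.coord j q = 1 := ν.sum_coord_apply_eq_one q
  have hsumL : ∑ j, (ν.coord j).linear (q - p) = 0 := by
    simp only [hL, Finset.sum_sub_distrib, hsum1, hsum2, sub_self]
  have hfilter : (Finset.univ.filter (fun j => j ≠ k)) = Finset.univ.erase k := by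
    ext j; simp [Finset.mem_erase, and_comm]
  rw [hfilter, Finset.sum_erase_eq_sub (Finset.mem_univ k)]
  have hexp : ∑ j, (ν.coord k p * (ν.coord j).linear (q - p)
      - ν.coord j p * (ν.coord k).linear (q - p))
      = ν.coord k p * (∑ j, (ν.coord j).linear (q - p))
        - (∑ j, ν.coord j p) * (ν.coord k).linear (q - p) := by
    rw [Finset.sum_sub_distrib, Finset.mul_sum, Finset.sum_mul]
  rw [hexp, hsumL, hsum1, hL k]
  ring
end

section
/- Preservation of the discrete Gauss law: under the above hypotheses (exact sequence property S̃·Cᵀ = 0, the leap-frog field update, the discrete continuity equation, and the initial condition S̃·(K·e⁰) = q⁰), it holds that S̃·(K·eⁿ) = qⁿ for all n ∈ ℕ. -/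
open Matrix
/-- Preservation of the discrete Gauss law. Under the exact
sequence property `S̃·Cᵀ = 0`, the leap-frog field update, the discrete
continuity equation, and the initial condition `S̃·(K·e⁰) = q⁰`, one has
`S̃·(K·eⁿ) = qⁿ` for all `n`. -/
theorem discrete_gauss_law_preservation
    (Nv Ne Nf : ℕ)
    (S : Matrix (Fin Nv) (Fin Ne) ℝ)
    (C : Matrix (Fin Nf) (Fin Ne) ℝ)
    (K : Matrix (Fin Ne) (Fin Ne) ℝ)
    (M : Matrix (Fin Nf) (Fin Nf) ℝ)
    (hSC : S * Cᵀ = 0)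
    (Δt : ℝ) (hΔt : 0 < Δt)
    (e : ℕ → Fin Ne → ℝ) (b : ℕ → Fin Nf → ℝ)
    (i : ℕ → Fin Ne → ℝ) (q : ℕ → Fin Nv → ℝ)
    (hfield : ∀ n, K.mulVec (e (n + 1))
      = K.mulVec (e n) + Δt • (Cᵀ.mulVec (M.mulVec (b n)) - i n))
    (hcont : ∀ n, q (n + 1) = q n - Δt • S.mulVec (i n))
    (hinit : S.mulVec (K.mulVec (e 0)) = q 0) :
    ∀ n, S.mulVec (K.mulVec (e n)) = q n := by
  intro n
  induction n with
  | zero => exact hinit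
  | succ n ih =>
    rw [hfield n, hcont n, mulVec_add, ih, Matrix.mulVec_smul]
    congr 1
    rw [mulVec_sub, smul_sub]
    congr 1
    rw [Matrix.mulVec_mulVec, hSC]
    simp [zero_mulVec, zero_sub]
    funext j
    simp [Pi.smul_apply, smul_eq_mul]
end

section
/- Semi-discrete energy balance: under the above hypotheses, for every t ∈ ℝ, d/dt [ ½·⟨e(t), K·e(t)⟩ + ½·⟨b(t), M·b(t)⟩ ] + ⟨e(t), i(t)⟩ = 0, where ⟨·,·⟩ is the Euclidean dot product; i.e., the time derivative of the discrete electromagnetic energy equals minus the power delivered by the current. -/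
/-!
With `K` and `M` symmetric, the energy has derivative `⟨e, K e'⟩ + ⟨b, M b'⟩`. Pairing Ampère's
law with `e` and moving `Cᵀ` across gives `⟨e, K e'⟩ + ⟨e, i⟩ = ⟨C e, M b⟩`, and Faraday's law
turns the right-hand side into `-⟨b', M b⟩ = -⟨b, M b'⟩`.
-/

open Matrix

section

variable {𝕜 : Type*} [NontriviallyNormedField 𝕜] {ι κ : Type*} [Fintype ι]

theorem HasDerivAt.dotProduct {u v : 𝕜 → ι → 𝕜} {u' v' : ι → 𝕜} {t : 𝕜}
    (hu : HasDerivAt u u' t) (hv : HasDerivAt v v' t) :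
    HasDerivAt (fun s => u s ⬝ᵥ v s) (u' ⬝ᵥ v t + u t ⬝ᵥ v') t := by
  rw [_root_.dotProduct, _root_.dotProduct, ← Finset.sum_add_distrib]
  exact HasDerivAt.fun_sum fun j _ => (hasDerivAt_pi.mp hu j).mul (hasDerivAt_pi.mp hv j)

theorem HasDerivAt.mulVec (A : Matrix κ ι 𝕜) {u : 𝕜 → ι → 𝕜} {u' : ι → 𝕜} {t : 𝕜}
    (hu : HasDerivAt u u' t) : HasDerivAt (fun s => A *ᵥ u s) (A *ᵥ u') t :=
  hasDerivAt_pi.mpr fun j =>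
    ((hasDerivAt_const t (A j)).dotProduct hu).congr_deriv (by rw [zero_dotProduct, zero_add]; rfl)

theorem Matrix.IsSymm.dotProduct_mulVec_comm {R : Type*} [CommSemiring R] {A : Matrix ι ι R}
    (hA : A.IsSymm) (u v : ι → R) : u ⬝ᵥ A *ᵥ v = v ⬝ᵥ A *ᵥ u := by
  rw [← dotProduct_transpose_mulVec, hA.eq]

theorem Matrix.IsSymm.hasDerivAt_dotProduct_mulVec_self {A : Matrix ι ι 𝕜} (hA : A.IsSymm)
    {u : 𝕜 → ι → 𝕜} {u' : ι → 𝕜} {t : 𝕜} (hu : HasDerivAt u u' t) :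
    HasDerivAt (fun s => u s ⬝ᵥ A *ᵥ u s) (2 * (u t ⬝ᵥ A *ᵥ u')) t := by
  convert hu.dotProduct (hu.mulVec A) using 1
  rw [hA.dotProduct_mulVec_comm u', two_mul]

end

/-- Semi-discrete energy balance: if `C·e(t) = −b′(t)` and
`Cᵀ·(M·b(t)) = K·e′(t) + i(t)` for symmetric `K`, `M`, then for every `t`,
`d/dt [½⟨e(t), K·e(t)⟩ + ½⟨b(t), M·b(t)⟩] + ⟨e(t), i(t)⟩ = 0`. -/
theorem semi_discrete_energy_balance
    (Ne Nf : ℕ)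
    (C : Matrix (Fin Nf) (Fin Ne) ℝ)
    (K : Matrix (Fin Ne) (Fin Ne) ℝ) (hK : K.IsSymm)
    (M : Matrix (Fin Nf) (Fin Nf) ℝ) (hM : M.IsSymm)
    (e : ℝ → Fin Ne → ℝ) (b : ℝ → Fin Nf → ℝ) (i : ℝ → Fin Ne → ℝ)
    (he : Differentiable ℝ e) (hb : Differentiable ℝ b)
    (hfaraday : ∀ t, C.mulVec (e t) = -(deriv b t))
    (hampere : ∀ t, Cᵀ.mulVec (M.mulVec (b t)) = K.mulVec (deriv e t) + i t) :
    ∀ t : ℝ,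
      deriv (fun t => (1 / 2) * (e t ⬝ᵥ K.mulVec (e t))
        + (1 / 2) * (b t ⬝ᵥ M.mulVec (b t))) t + e t ⬝ᵥ i t = 0 := by
  intro t
  have hK' := (hK.hasDerivAt_dotProduct_mulVec_self (he t).hasDerivAt).const_mul (1 / 2 : ℝ)
  have hM' := (hM.hasDerivAt_dotProduct_mulVec_self (hb t).hasDerivAt).const_mul (1 / 2 : ℝ)
  have hpower : e t ⬝ᵥ K *ᵥ deriv e t + e t ⬝ᵥ i t = -(b t ⬝ᵥ M *ᵥ deriv b t) := by
    rw [← dotProduct_add, ← hampere t, dotProduct_transpose_mulVec, hfaraday t,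
      dotProduct_comm, neg_dotProduct, hM.dotProduct_mulVec_comm]
  rw [(hK'.fun_add hM').deriv]
  linear_combination hpower
end

section
/- Whitney 1-forms are interpolatory on edges: for indices i ≠ j and a ≠ b in {1, 2, 3}, the line integral of W¹ᵢⱼ along the straight segment from ν_a to ν_b equals δᵢₐ·δⱼᵦ − δᵢᵦ·δⱼₐ; i.e., it equals 1 if (a, b) = (i, j), equals −1 if (a, b) = (j, i), and equals 0 for every other edge of the triangle. -/
open MeasureTheory

lemma coord_line (ν : AffineBasis (Fin 3) ℝ (Fin 2 → ℝ)) (i a b : Fin 3) (s : ℝ) :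
    ν.coord i (ν a + s • (ν b - ν a))
      = (if i = a then (1:ℝ) else 0)
        + s * ((if i = b then (1:ℝ) else 0) - (if i = a then (1:ℝ) else 0)) := by
  have h : ν a + s • (ν b - ν a) = s • (ν b - ν a) +ᵥ ν a := by
    simp [vadd_eq_add, add_comm]
  rw [h, AffineMap.map_vadd, (ν.coord i).linear.map_smul]
  have hlin : (ν.coord i).linear (ν b - ν a) = ν.coord i (ν b) - ν.coord i (ν a) := by
    have := (ν.coord i).linearMap_vsub (ν b) (ν a)
    simpa [vsub_eq_sub] using this
  rw [vadd_eq_add, smul_eq_mul, hlin]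
  simp [AffineBasis.coord_apply]
  ring

/-- Whitney 1-forms are interpolatory on edges: for indices
`i ≠ j` and `a ≠ b`, the line integral of `W¹ᵢⱼ` along the straight segment
from `ν_a` to `ν_b` equals `δᵢₐ·δⱼᵦ − δᵢᵦ·δⱼₐ`. -/
theorem whitney_one_form_interpolatory
    (ν : AffineBasis (Fin 3) ℝ (Fin 2 → ℝ)) (i j a b : Fin 3)
    (hij : i ≠ j) (hab : a ≠ b) :
    (∫ s in (0:ℝ)..1,
      (ν.coord i (ν a + s • (ν b - ν a)) * (ν.coord j).linear (ν b - ν a)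
        - ν.coord j (ν a + s • (ν b - ν a)) * (ν.coord i).linear (ν b - ν a)))
      = (if i = a then (1:ℝ) else 0) * (if j = b then 1 else 0)
        - (if i = b then 1 else 0) * (if j = a then 1 else 0) := by
  have hlin : ∀ k : Fin 3, (ν.coord k).linear (ν b - ν a)
      = (if k = b then (1:ℝ) else 0) - (if k = a then (1:ℝ) else 0) := by
    intro k
    have := (ν.coord k).linearMap_vsub (ν b) (ν a)
    simp only [vsub_eq_sub] at this
    rw [this]
    simp [AffineBasis.coord_apply]
  have key : ∀ s : ℝ,
      ν.coord i (ν a + s • (ν b - ν a)) * (ν.coord j).linear (ν b - ν a)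
        - ν.coord j (ν a + s • (ν b - ν a)) * (ν.coord i).linear (ν b - ν a)
      = (if i = a then (1:ℝ) else 0) * (if j = b then 1 else 0)
        - (if i = b then 1 else 0) * (if j = a then 1 else 0) := by
    intro s
    rw [coord_line, coord_line, hlin, hlin]
    ring
  simp only [key]
  simp
end
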